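/- arXiv:1905.05545 — 2 statements merged into one kernel-verified Lean document; each statement's English description precedes it below -/
import Mathlib

section
/- Let p ≥ 3 be a prime and q ≥ 2, 1 ≤ ℓ ≤ p−1 integers, and let g = Σ_{μ=1}^{p−1} (μq − ⌊μℓ/p⌋ − 1). Then |(A + A) \ C(0)| ≤ 3(g − 1). -/
open Pointwise

/-- The index set `A` of the paper. -/
def indexSetA (p q ℓ : ℤ) : Set (ℤ × ℤ) :=
  {x : ℤ × ℤ | 1 ≤ x.2 ∧ x.2 ≤ p - 1 ∧ x.2 * ℓ / p ≤ x.1 ∧ x.1 ≤ x.2 * q - 2}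

/-- `j_min(i)`: `0` if `ℓ = 1` and `p - i` otherwise. -/
def jMin (p ℓ i : ℤ) : ℤ := if ℓ = 1 then 0 else p - i

/-- The subset `C(i)` of the Minkowski sum `A + A`. -/
def setC (p q ℓ i : ℤ) : Set (ℤ × ℤ) :=
  {x : ℤ × ℤ | x ∈ indexSetA p q ℓ + indexSetA p q ℓ ∧
    (x.1 + ℓ, x.2 + p) ∈ indexSetA p q ℓ + indexSetA p q ℓ ∧
    ∀ j : ℤ, jMin p ℓ i ≤ j → j ≤ (p - i) * q →
      (x.1 + j, x.2 + p - i) ∈ indexSetA p q ℓ + indexSetA p q ℓ}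

open Finset

/-!
Row `T` of `A + A` (`2 ≤ T ≤ 2p - 2`) is the interval `[m T, Tq - 4]` with
`m T = ⌊Tℓ/p⌋ - 1 + e T`, where `e T ∈ {0, 1}` records that no splitting `T = μ + μ'` into rows
of `A` makes `⌊μℓ/p⌋ + ⌊μ'ℓ/p⌋` drop below `⌊Tℓ/p⌋`. Row `T + p` of `A + A` is empty for
`T ≥ p - 1`, so those rows are entirely outside `C(0)`; for `T ≤ p - 2` at most
`e (T + p) (1 - e T)` points of row `T` are outside `C(0)` (none when `ℓ = 1`, where `jMin = 0`
and `m (T + p) = 0`). Using `⌊(T + p)ℓ/p⌋ = ⌊Tℓ/p⌋ + ℓ` and `2g = (p - 1)(pq - ℓ - 1)` (pair `μ`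
with `p - μ`), this bounds the complement of `C(0)` by `3g - 2 - E`, where
`E = e (p - 1) + ∑_{T ≤ p - 2} e T e (T + p)`. Finally `E ≥ 1`: the solution `T₀ ∈ [1, p - 1]`
of `T₀ℓ ≡ -1 (mod p)` makes both `T₀` and `T₀ + p` carry-free.
-/

theorem sum_Icc_reflect {M : Type*} [AddCommMonoid M] (h : ℤ → M) (a b : ℤ) :
    ∑ i ∈ Icc a b, h (a + b - i) = ∑ i ∈ Icc a b, h i :=
  sum_nbij' (fun i => a + b - i) (fun i => a + b - i)
    (fun i hi => by simp only [mem_Icc] at hi ⊢; omega)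
    (fun i hi => by simp only [mem_Icc] at hi ⊢; omega)
    (fun i _ => by ring) (fun i _ => by ring) (fun _ _ => rfl)

theorem sum_Icc_sub_one_two_mul_sub_two {M : Type*} [AddCommMonoid M] (h : ℤ → M) {p : ℤ}
    (hp : 1 ≤ p) :
    ∑ T ∈ Icc (p - 1) (2 * p - 2), h T = h (p - 1) + ∑ T ∈ Icc 0 (p - 2), h (T + p) := by
  have hshift : Icc p (2 * p - 2) = (Icc 0 (p - 2)).map (addRightEmbedding p) := by
    rw [map_add_right_Icc]; congr 1 <;> ring
  rw [← insert_Icc_add_one_left_eq_Icc (by omega : p - 1 ≤ 2 * p - 2), sub_add_cancel,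
    sum_insert (by simp), hshift, sum_map]
  rfl

theorem sum_Icc_zero_add_eq_add_sum_Icc_one {M : Type*} [AddCommMonoid M] (h : ℤ → M) {p : ℤ}
    (hp : 1 ≤ p) :
    ∑ T ∈ Icc 0 (p - 2), h T + h (p - 1) = h 0 + ∑ T ∈ Icc 1 (p - 1), h T := by
  have hleft : insert 0 (Icc 1 (p - 1)) = Icc 0 (p - 1) := by
    simpa using insert_Icc_add_one_left_eq_Icc (by omega : (0 : ℤ) ≤ p - 1)
  have hright : insert (p - 1) (Icc 0 (p - 2)) = Icc 0 (p - 1) := by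
    rw [show p - 2 = p - 1 - 1 by ring, insert_Icc_sub_one_right_eq_Icc (by omega)]
  rw [← sum_insert (by simp), hleft, add_comm, ← sum_insert (by simp; omega), hright]

theorem ncard_le_sum_card_Icc {S : Set (ℤ × ℤ)} (I : Finset ℤ) (a b : ℤ → ℤ)
    (hS : ∀ x ∈ S, x.2 ∈ I ∧ x.1 ∈ Icc (a x.2) (b x.2)) :
    S.ncard ≤ ∑ T ∈ I, #(Icc (a T) (b T)) := by
  have hsub : S ⊆ ↑(I.biUnion fun T => Icc (a T) (b T) ×ˢ {T}) := by
    intro x hx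
    obtain ⟨hT, hσ⟩ := hS x hx
    simp only [coe_biUnion, Set.mem_iUnion, mem_coe, mem_product, mem_singleton]
    exact ⟨x.2, hT, hσ, rfl⟩
  calc S.ncard ≤ #(I.biUnion fun T => Icc (a T) (b T) ×ˢ {T}) := by
        simpa only [Set.ncard_coe_finset] using Set.ncard_le_ncard hsub (Finset.finite_toSet _)
    _ ≤ ∑ T ∈ I, #(Icc (a T) (b T) ×ˢ {T}) := card_biUnion_le
    _ = ∑ T ∈ I, #(Icc (a T) (b T)) := by simp only [card_product, card_singleton, mul_one]

/-- `T` is carry-free when `⌊μℓ/p⌋ + ⌊(T - μ)ℓ/p⌋ = ⌊Tℓ/p⌋` for every splitting of `T` into two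
rows `μ, T - μ` of `A`. -/
def CarryFree (p ℓ T : ℤ) : Prop :=
  ∀ μ, 1 ≤ μ → μ ≤ p - 1 → 1 ≤ T - μ → T - μ ≤ p - 1 → μ * ℓ % p + (T - μ) * ℓ % p < p

open Classical in
noncomputable def carryFreeInd (p ℓ T : ℤ) : ℤ := if CarryFree p ℓ T then 1 else 0

/-- The smallest first coordinate in row `T` of `A + A`, see `mem_indexSetA_add_iff`. -/
noncomputable def sumRowMin (p ℓ T : ℤ) : ℤ := T * ℓ / p - 1 + carryFreeInd p ℓ T

theorem carryFreeInd_eq_zero_or_one (p ℓ T : ℤ) :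
    carryFreeInd p ℓ T = 0 ∨ carryFreeInd p ℓ T = 1 := by
  unfold carryFreeInd; split_ifs <;> simp

section Carry

variable {p ℓ T μ : ℤ}

theorem ediv_add_ediv_eq_of_carryFree (hp : 0 < p) (hT : CarryFree p ℓ T) (h1 : 1 ≤ μ)
    (h2 : μ ≤ p - 1) (h3 : 1 ≤ T - μ) (h4 : T - μ ≤ p - 1) :
    μ * ℓ / p + (T - μ) * ℓ / p = T * ℓ / p := by
  have := Int.add_ediv_of_pos (a := μ * ℓ) (b := (T - μ) * ℓ) hp
  rw [if_neg (not_le.2 (hT μ h1 h2 h3 h4)), add_zero, ← add_mul, add_sub_cancel] at this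
  exact this.symm

theorem sumRowMin_le_ediv_add_ediv (hp : 0 < p) (h1 : 1 ≤ μ) (h2 : μ ≤ p - 1) (h3 : 1 ≤ T - μ)
    (h4 : T - μ ≤ p - 1) : sumRowMin p ℓ T ≤ μ * ℓ / p + (T - μ) * ℓ / p := by
  unfold sumRowMin carryFreeInd
  split_ifs with hT
  · rw [ediv_add_ediv_eq_of_carryFree hp hT h1 h2 h3 h4]; omega
  · have := Int.add_ediv_of_pos (a := μ * ℓ) (b := (T - μ) * ℓ) hp
    rw [← add_mul, add_sub_cancel] at this
    split_ifs at this <;> omega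

theorem exists_ediv_add_ediv_le_sumRowMin (hp : 0 < p) (hT1 : 2 ≤ T) (hT2 : T ≤ 2 * p - 2) :
    ∃ μ, 1 ≤ μ ∧ μ ≤ p - 1 ∧ 1 ≤ T - μ ∧ T - μ ≤ p - 1 ∧
      μ * ℓ / p + (T - μ) * ℓ / p ≤ sumRowMin p ℓ T := by
  unfold sumRowMin carryFreeInd
  split_ifs with hT
  · refine ⟨max 1 (T - (p - 1)), by omega, by omega, by omega, by omega, ?_⟩
    have := Int.ediv_add_ediv_le_add_ediv (x := max 1 (T - (p - 1)) * ℓ)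
      (y := (T - max 1 (T - (p - 1))) * ℓ) hp
    rw [← add_mul, add_sub_cancel] at this
    omega
  · obtain ⟨μ, h1, h2, h3, h4, hcarry⟩ : ∃ μ, 1 ≤ μ ∧ μ ≤ p - 1 ∧ 1 ≤ T - μ ∧ T - μ ≤ p - 1 ∧
        p ≤ μ * ℓ % p + (T - μ) * ℓ % p := by
      simpa [CarryFree] using hT
    refine ⟨μ, h1, h2, h3, h4, ?_⟩
    have := Int.add_ediv_of_pos (a := μ * ℓ) (b := (T - μ) * ℓ) hp
    rw [if_pos hcarry, ← add_mul, add_sub_cancel] at this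
    omega

theorem carryFree_of_mul_emod_eq (hp : 0 < p) (hT : T * ℓ % p = p - 1) : CarryFree p ℓ T := by
  intro μ _ _ _ _
  have hsum := Int.add_emod (μ * ℓ) ((T - μ) * ℓ) p
  rw [← add_mul, add_sub_cancel, hT] at hsum
  have := Int.emod_lt_of_pos (μ * ℓ) hp
  have := Int.emod_lt_of_pos ((T - μ) * ℓ) hp
  have := Int.emod_nonneg (μ * ℓ) hp.ne'
  have := Int.emod_nonneg ((T - μ) * ℓ) hp.ne'
  by_contra hcarry
  rw [← Int.sub_emod_right, Int.emod_eq_of_lt (by omega) (by omega)] at hsum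
  omega

end Carry

section SumSet

variable {p q ℓ T : ℤ}

theorem ediv_le_sub_one (hp : 0 < p) (hℓp : ℓ ≤ p - 1) {μ : ℤ} (hμ : 1 ≤ μ) :
    μ * ℓ / p ≤ μ - 1 := by
  have := Int.ediv_lt_of_lt_mul hp (show μ * ℓ < μ * p by nlinarith)
  omega

theorem mem_indexSetA_add_iff (hp : 0 < p) (hq : 2 ≤ q) (hℓp : ℓ ≤ p - 1) {x : ℤ × ℤ} :
    x ∈ indexSetA p q ℓ + indexSetA p q ℓ ↔
      2 ≤ x.2 ∧ x.2 ≤ 2 * p - 2 ∧ sumRowMin p ℓ x.2 ≤ x.1 ∧ x.1 ≤ x.2 * q - 4 := by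
  constructor
  · rintro ⟨a, ⟨ha1, ha2, ha3, ha4⟩, b, ⟨hb1, hb2, hb3, hb4⟩, rfl⟩
    have := sumRowMin_le_ediv_add_ediv (ℓ := ℓ) hp ha1 ha2 (T := a.2 + b.2) (by omega) (by omega)
    simp only [Prod.fst_add, Prod.snd_add, add_sub_cancel_left] at this ⊢
    refine ⟨by omega, by omega, by omega, by linarith⟩
  · rintro ⟨hT1, hT2, hlow, hup⟩
    obtain ⟨μ, h1, h2, h3, h4, hμ⟩ := exists_ediv_add_ediv_le_sumRowMin (ℓ := ℓ) hp hT1 hT2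
    have hμq := ediv_le_sub_one hp hℓp h1
    have hμq' := ediv_le_sub_one hp hℓp h3
    have : 2 * μ ≤ μ * q := by nlinarith
    have : 2 * (x.2 - μ) ≤ (x.2 - μ) * q := by nlinarith
    -- split `x.1` between the intervals of rows `μ` and `x.2 - μ` of `A`
    set s := min (μ * q - 2) (x.1 - (x.2 - μ) * ℓ / p)
    have : x.2 * q = μ * q + (x.2 - μ) * q := by ring
    refine ⟨(s, μ), ⟨h1, h2, ?_, ?_⟩, (x.1 - s, x.2 - μ), ⟨h3, h4, ?_, ?_⟩, by simp⟩ <;>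
      dsimp only <;> omega

theorem fst_nonneg_of_mem_indexSetA_add (hp : 0 < p) (hℓ : 0 ≤ ℓ) {x : ℤ × ℤ}
    (hx : x ∈ indexSetA p q ℓ + indexSetA p q ℓ) : 0 ≤ x.1 := by
  obtain ⟨a, ⟨ha1, -, ha3, -⟩, b, ⟨hb1, -, hb3, -⟩, rfl⟩ := hx
  have := Int.ediv_nonneg (mul_nonneg (by omega : 0 ≤ a.2) hℓ) hp.le
  have := Int.ediv_nonneg (mul_nonneg (by omega : 0 ≤ b.2) hℓ) hp.le
  simp only [Prod.fst_add]
  omega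

theorem sumRowMin_one_add (hT0 : 0 ≤ T) (hT : T ≤ p - 2) : sumRowMin p 1 (T + p) = 0 := by
  have hp : 0 < p := by omega
  have hTp : T < p := by omega
  have hnot : ¬ CarryFree p 1 (T + p) := fun h => by
    have := h (p - 1) (by omega) le_rfl (by omega) (by omega)
    rw [mul_one, mul_one, Int.emod_eq_of_lt (by omega) (by omega),
      Int.emod_eq_of_lt (by omega) (by omega)] at this
    omega
  rw [sumRowMin, carryFreeInd, if_neg hnot, mul_one,
    Int.add_ediv_of_pos hp, Int.ediv_self hp.ne', Int.ediv_eq_zero_of_lt hT0 hTp]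
  simp [Int.emod_eq_of_lt hT0 hTp, hTp]

theorem mem_setC_zero_of_le (hp : 0 < p) (hq : 2 ≤ q) (hℓp : ℓ ≤ p - 1) {x : ℤ × ℤ}
    (hx : x ∈ indexSetA p q ℓ + indexSetA p q ℓ) (hT : x.2 ≤ p - 2)
    (hℓ : sumRowMin p ℓ (x.2 + p) ≤ x.1 + ℓ) (hj : sumRowMin p ℓ (x.2 + p) ≤ x.1 + jMin p ℓ 0) :
    x ∈ setC p q ℓ 0 := by
  obtain ⟨hT1, -, -, hup⟩ := (mem_indexSetA_add_iff hp hq hℓp).1 hx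
  have hpq : (x.2 + p) * q = x.2 * q + p * q := by ring
  have : 2 * p ≤ p * q := by nlinarith
  refine ⟨hx, (mem_indexSetA_add_iff hp hq hℓp).2 ⟨by omega, by omega, hℓ, ?_⟩,
    fun j hj1 hj2 => (mem_indexSetA_add_iff hp hq hℓp).2 ⟨?_, ?_, ?_, ?_⟩⟩
  · dsimp only; omega
  all_goals simp only [sub_zero] at hj2 ⊢; omega

theorem add_lt_sumRowMin_of_notMem_setC (hp : 0 < p) (hq : 2 ≤ q) (hℓ1 : 1 ≤ ℓ)
    (hℓp : ℓ ≤ p - 1) {x : ℤ × ℤ} (hx : x ∈ indexSetA p q ℓ + indexSetA p q ℓ)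
    (hxC : x ∉ setC p q ℓ 0) (hT : x.2 ≤ p - 2) : x.1 + ℓ < sumRowMin p ℓ (x.2 + p) := by
  by_contra! hle
  refine hxC (mem_setC_zero_of_le hp hq hℓp hx hT hle ?_)
  unfold jMin
  split_ifs with hℓ
  · subst hℓ
    have := ((mem_indexSetA_add_iff hp hq hℓp).1 hx).1
    rw [sumRowMin_one_add (by omega) hT]
    simpa using fst_nonneg_of_mem_indexSetA_add hp zero_le_one hx
  · omega

end SumSet

section Residues

variable {p ℓ μ : ℤ}

theorem mul_emod_pos (hp : Prime p) (h1 : 1 ≤ μ) (h2 : μ ≤ p - 1) (hℓ1 : 1 ≤ ℓ)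
    (hℓp : ℓ ≤ p - 1) : 0 < μ * ℓ % p := by
  have hndvd : ∀ n, 1 ≤ n → n ≤ p - 1 → ¬ p ∣ n := fun n h1 h2 hdvd => by
    have := Int.eq_zero_of_dvd_of_nonneg_of_lt (by omega) (by omega) hdvd
    omega
  have := Int.emod_pos_of_not_dvd fun h => (hp.dvd_or_dvd h).elim (hndvd μ h1 h2) (hndvd ℓ hℓ1 hℓp)
  omega

theorem ediv_add_ediv_sub_self (hp : Prime p) (h1 : 1 ≤ μ) (h2 : μ ≤ p - 1) (hℓ1 : 1 ≤ ℓ)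
    (hℓp : ℓ ≤ p - 1) : μ * ℓ / p + (p - μ) * ℓ / p = ℓ - 1 := by
  have hp0 : 0 < p := by omega
  have := mul_emod_pos hp h1 h2 hℓ1 hℓp
  have := mul_emod_pos hp (μ := p - μ) (by omega) (by omega) hℓ1 hℓp
  have hsum : μ * ℓ + (p - μ) * ℓ = ℓ * p := by ring
  -- the two residues are nonzero and add up to a multiple of `p`, so they carry
  have hcarry : p ≤ μ * ℓ % p + (p - μ) * ℓ % p := by
    by_contra h
    have := Int.add_emod (μ * ℓ) ((p - μ) * ℓ) p
    rw [hsum, Int.mul_emod_left, Int.emod_eq_of_lt (by omega) (by omega)] at this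
    omega
  have := Int.add_ediv_of_pos (a := μ * ℓ) (b := (p - μ) * ℓ) hp0
  rw [hsum, if_pos hcarry, Int.mul_ediv_cancel _ hp0.ne'] at this
  omega

theorem two_mul_sum_Icc_sub_ediv (hp : Prime p) (hℓ1 : 1 ≤ ℓ) (hℓp : ℓ ≤ p - 1) (q : ℤ) :
    2 * ∑ μ ∈ Icc 1 (p - 1), (μ * q - μ * ℓ / p - 1) = (p - 1) * (p * q - ℓ - 1) := by
  have hreflect := sum_Icc_reflect (fun μ => μ * q - μ * ℓ / p - 1) 1 (p - 1)
  have hpair : ∀ μ ∈ Icc 1 (p - 1), (μ * q - μ * ℓ / p - 1) +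
      ((1 + (p - 1) - μ) * q - (1 + (p - 1) - μ) * ℓ / p - 1) = p * q - ℓ - 1 := by
    intro μ hμ
    rw [mem_Icc] at hμ
    rw [show 1 + (p - 1) - μ = p - μ by ring]
    linear_combination -ediv_add_ediv_sub_self hp hμ.1 hμ.2 hℓ1 hℓp
  rw [two_mul]
  nth_rewrite 2 [← hreflect]
  rw [← sum_add_distrib, sum_congr rfl hpair, sum_const, Int.card_Icc, nsmul_eq_mul,
    Int.toNat_of_nonneg (by omega)]
  ring

theorem exists_mul_emod_eq_sub_one (hp : Prime p) (hℓ1 : 1 ≤ ℓ) (hℓp : ℓ ≤ p - 1) :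
    ∃ T, 1 ≤ T ∧ T ≤ p - 1 ∧ T * ℓ % p = p - 1 := by
  have hp0 : 0 < p := by omega
  obtain ⟨u, v, huv⟩ : IsCoprime ℓ p := (hp.coprime_iff_not_dvd.2 fun h => by
    have := Int.le_of_dvd (by omega) h
    omega).symm
  have hT : -u % p * ℓ % p = p - 1 := by
    have : -u % p * ℓ = (p - 1) + p * (v - 1 - ℓ * (-u / p)) := by
      rw [Int.emod_def]; linear_combination -huv
    rw [this, Int.add_mul_emod_self_left, Int.emod_eq_of_lt (by omega) (by omega)]
  refine ⟨-u % p, ?_, ?_, hT⟩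
  · by_contra h0
    have : -u % p = 0 := by have := Int.emod_nonneg (-u) hp0.ne'; omega
    rw [this, zero_mul, Int.zero_emod] at hT
    omega
  · have := Int.emod_lt_of_pos (-u) hp0
    omega

theorem one_le_carryFreeInd_add_sum (hp : Prime p) (hℓ1 : 1 ≤ ℓ) (hℓp : ℓ ≤ p - 1) :
    1 ≤ carryFreeInd p ℓ (p - 1) +
      ∑ T ∈ Icc 0 (p - 2), carryFreeInd p ℓ T * carryFreeInd p ℓ (T + p) := by
  have hp0 : 0 < p := by omega
  obtain ⟨T₀, h1, h2, hT₀⟩ := exists_mul_emod_eq_sub_one hp hℓ1 hℓp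
  have hind : ∀ T, T * ℓ % p = p - 1 → carryFreeInd p ℓ T = 1 := fun T h => by
    rw [carryFreeInd, if_pos (carryFree_of_mul_emod_eq hp0 h)]
  have hnonneg : ∀ T ∈ Icc 0 (p - 2), 0 ≤ carryFreeInd p ℓ T * carryFreeInd p ℓ (T + p) :=
    fun T _ => by
      rcases carryFreeInd_eq_zero_or_one p ℓ T with h | h <;> rw [h] <;>
        rcases carryFreeInd_eq_zero_or_one p ℓ (T + p) with h' | h' <;> rw [h'] <;> norm_num
  have := carryFreeInd_eq_zero_or_one p ℓ (p - 1)
  rcases eq_or_lt_of_le h2 with rfl | hlt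
  · have := sum_nonneg hnonneg
    rw [hind _ hT₀]
    omega
  · have hT₀p : (T₀ + p) * ℓ % p = p - 1 := by
      rw [add_mul, Int.add_mul_emod_self_left, hT₀]
    have := single_le_sum hnonneg (mem_Icc.2 ⟨by omega, by omega⟩ : T₀ ∈ Icc 0 (p - 2))
    rw [hind _ hT₀, hind _ hT₀p] at this
    omega

end Residues

section Counting

variable {p q ℓ T : ℤ}

theorem add_mul_ediv_self (hp : p ≠ 0) : (T + p) * ℓ / p = T * ℓ / p + ℓ := by
  rw [add_mul, mul_comm p ℓ, Int.add_mul_ediv_right _ _ hp]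

theorem card_Icc_sumRowMin (hp : 0 < p) (hq : 2 ≤ q) (hℓp : ℓ ≤ p - 1) (hT : 2 ≤ T) :
    (#(Icc (sumRowMin p ℓ T) (T * q - 4)) : ℤ) =
      T * q - 2 - T * ℓ / p - carryFreeInd p ℓ T := by
  have := ediv_le_sub_one hp hℓp (by omega : 1 ≤ T)
  have : 2 * T ≤ T * q := by nlinarith
  have := carryFreeInd_eq_zero_or_one p ℓ T
  rw [Int.card_Icc, sumRowMin]
  omega

theorem card_Icc_sumRowMin_le (hp : 0 < p) :
    (#(Icc (sumRowMin p ℓ T) (sumRowMin p ℓ (T + p) - ℓ - 1)) : ℤ) ≤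
      carryFreeInd p ℓ (T + p) - carryFreeInd p ℓ T * carryFreeInd p ℓ (T + p) := by
  rw [Int.card_Icc, sumRowMin, sumRowMin, add_mul_ediv_self hp.ne']
  rcases carryFreeInd_eq_zero_or_one p ℓ T with h | h <;> rw [h] <;>
    rcases carryFreeInd_eq_zero_or_one p ℓ (T + p) with h' | h' <;> rw [h'] <;> omega

theorem card_Icc_sumRowMin_add_le (hp : 0 < p) (hq : 2 ≤ q) (hℓp : ℓ ≤ p - 1) (hT : 2 ≤ T + p) :
    (#(Icc (sumRowMin p ℓ (T + p)) ((T + p) * q - 4)) : ℤ) +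
        #(Icc (sumRowMin p ℓ T) (sumRowMin p ℓ (T + p) - ℓ - 1)) ≤
      (T * q - T * ℓ / p) + (p * q - ℓ - 2) - carryFreeInd p ℓ T * carryFreeInd p ℓ (T + p) := by
  rw [card_Icc_sumRowMin hp hq hℓp hT, add_mul_ediv_self hp.ne']
  linarith [card_Icc_sumRowMin_le (ℓ := ℓ) (T := T) hp]

theorem sum_card_Icc_sumRowMin_le (hp : Prime p) (hp3 : 3 ≤ p) (hq : 2 ≤ q) (hℓ1 : 1 ≤ ℓ)
    (hℓp : ℓ ≤ p - 1) :
    ∑ T ∈ Icc (p - 1) (2 * p - 2), (#(Icc (sumRowMin p ℓ T) (T * q - 4)) : ℤ) +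
        ∑ T ∈ Icc 0 (p - 2), (#(Icc (sumRowMin p ℓ T) (sumRowMin p ℓ (T + p) - ℓ - 1)) : ℤ) ≤
      3 * (∑ μ ∈ Icc 1 (p - 1), (μ * q - μ * ℓ / p - 1) - 1) := by
  have hp0 : 0 < p := by omega
  have hcard₀ : (#(Icc 0 (p - 2)) : ℤ) = p - 1 := by
    rw [Int.card_Icc, Int.toNat_of_nonneg (by omega)]; ring
  have hcard₁ : (#(Icc 1 (p - 1)) : ℤ) = p - 1 := by
    rw [Int.card_Icc, Int.toNat_of_nonneg (by omega)]; ring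
  have hrows : ∑ T ∈ Icc 0 (p - 2), ((#(Icc (sumRowMin p ℓ (T + p)) ((T + p) * q - 4)) : ℤ) +
        #(Icc (sumRowMin p ℓ T) (sumRowMin p ℓ (T + p) - ℓ - 1))) ≤
      ∑ T ∈ Icc 0 (p - 2), ((T * q - T * ℓ / p) + (p * q - ℓ - 2) -
        carryFreeInd p ℓ T * carryFreeInd p ℓ (T + p)) :=
    sum_le_sum fun T hT => card_Icc_sumRowMin_add_le hp0 hq hℓp (by rw [mem_Icc] at hT; omega)
  rw [sum_add_distrib, sum_sub_distrib, sum_add_distrib, sum_const, nsmul_eq_mul, hcard₀] at hrows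
  have hk := sum_Icc_zero_add_eq_add_sum_Icc_one (fun T => T * q - T * ℓ / p) (p := p) (by omega)
  have hg : ∑ μ ∈ Icc 1 (p - 1), (μ * q - μ * ℓ / p - 1) =
      ∑ μ ∈ Icc 1 (p - 1), (μ * q - μ * ℓ / p) - (p - 1) := by
    rw [sum_sub_distrib, sum_const, nsmul_eq_mul, hcard₁, mul_one]
  simp only [zero_mul, Int.zero_ediv, sub_zero, zero_add] at hk
  rw [sum_Icc_sub_one_two_mul_sub_two _ (by omega), card_Icc_sumRowMin hp0 hq hℓp (by omega)]
  linarith [two_mul_sum_Icc_sub_ediv hp hℓ1 hℓp q, one_le_carryFreeInd_add_sum hp hℓ1 hℓp]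

end Counting

/-- for a prime `p ≥ 3`, `q ≥ 2`, `1 ≤ ℓ ≤ p - 1` and
`g = ∑_{μ=1}^{p-1} (μq - ⌊μℓ/p⌋ - 1)`, one has `|(A + A) \ C(0)| ≤ 3(g - 1)`. -/
theorem card_minkowski_sdiff_C0_le (p q ℓ : ℤ) (hp : Prime p) (hp3 : 3 ≤ p) (hq : 2 ≤ q)
    (hℓ1 : 1 ≤ ℓ) (hℓp : ℓ ≤ p - 1) (g : ℤ)
    (hg : g = ∑ μ ∈ Finset.Icc (1 : ℤ) (p - 1), (μ * q - μ * ℓ / p - 1)) :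
    (((indexSetA p q ℓ + indexSetA p q ℓ) \ setC p q ℓ 0).ncard : ℤ) ≤ 3 * (g - 1) := by
  have hp0 : 0 < p := by omega
  set S := (indexSetA p q ℓ + indexSetA p q ℓ) \ setC p q ℓ 0
  set highRows : Set (ℤ × ℤ) := {x | p - 1 ≤ x.2}
  have hhigh : (S ∩ highRows).ncard ≤
      ∑ T ∈ Icc (p - 1) (2 * p - 2), #(Icc (sumRowMin p ℓ T) (T * q - 4)) := by
    refine ncard_le_sum_card_Icc _ _ _ fun x ⟨⟨hx, _⟩, hT⟩ => ?_
    obtain ⟨-, hT2, hmin, hmax⟩ := (mem_indexSetA_add_iff hp0 hq hℓp).1 hx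
    exact ⟨mem_Icc.2 ⟨hT, hT2⟩, mem_Icc.2 ⟨hmin, hmax⟩⟩
  have hlow : (S \ highRows).ncard ≤
      ∑ T ∈ Icc 0 (p - 2), #(Icc (sumRowMin p ℓ T) (sumRowMin p ℓ (T + p) - ℓ - 1)) := by
    refine ncard_le_sum_card_Icc _ _ _ fun x ⟨⟨hx, hxC⟩, hT⟩ => ?_
    replace hT : x.2 ≤ p - 2 := by simp only [highRows, Set.mem_ofPred_eq] at hT; omega
    obtain ⟨hT1, -, hmin, -⟩ := (mem_indexSetA_add_iff hp0 hq hℓp).1 hx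
    have := add_lt_sumRowMin_of_notMem_setC hp0 hq hℓ1 hℓp hx hxC hT
    exact ⟨mem_Icc.2 ⟨by omega, hT⟩, mem_Icc.2 ⟨hmin, by omega⟩⟩
  calc (S.ncard : ℤ) = ((S ∩ highRows) ∪ (S \ highRows)).ncard := by rw [Set.inter_union_sdiff]
    _ ≤ (S ∩ highRows).ncard + (S \ highRows).ncard := by exact_mod_cast Set.ncard_union_le _ _
    _ ≤ _ := by exact_mod_cast add_le_add hhigh hlow
    _ ≤ 3 * (g - 1) := hg ▸ sum_card_Icc_sumRowMin_le hp hp3 hq hℓ1 hℓp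
end

section
/- Let A be a finite nonempty subset of ℤ × ℤ, F a field, S = F[z_a : a ∈ A], and ≺ a monomial order on S. Assign to each degree-2 monomial z_a z_{a'} the multidegree a + a' ∈ ℤ × ℤ, and for each c ∈ A + A let σ(c) denote the ≺-minimal degree-2 monic monomial with multidegree c. Let G_1 = {m − m' : m, m' distinct degree-2 monic monomials with equal multidegree}, let C be any subset of A + A, and let H ⊆ S be a set of polynomials such that for every c ∈ C there exists h ∈ H whose leading monomial with respect to ≺ equals σ(c). Then dim_F (S/⟨in_≺(f) : f ∈ G_1 ∪ H⟩)_2 ≤ |(A + A) \ C|. -/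
open MvPolynomial Pointwise
open scoped MonomialOrder

/-- The total degree of an exponent vector. -/
def expDeg {A : Finset (ℤ × ℤ)} (d : ↥A →₀ ℕ) : ℕ := d.sum fun _ k => k

/-- The multidegree of an exponent vector indexed by `A ⊆ ℤ × ℤ`. -/
def expMdeg {A : Finset (ℤ × ℤ)} (d : ↥A →₀ ℕ) : ℤ × ℤ := d.sum fun a k => k • (a : ℤ × ℤ)

/-- The leading exponent of a multivariate polynomial with respect to a monomial order. -/
noncomputable def leadExp {σ F : Type*} [CommSemiring F] (m : MonomialOrder σ)
    (f : MvPolynomial σ F) : σ →₀ ℕ :=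
  m.toSyn.symm (f.support.sup fun d => m.toSyn d)

/-- The leading term `in_≺(f)` of a multivariate polynomial with respect to a monomial order. -/
noncomputable def leadTerm {σ F : Type*} [CommSemiring F] (m : MonomialOrder σ)
    (f : MvPolynomial σ F) : MvPolynomial σ F :=
  monomial (leadExp m f) (f.coeff (leadExp m f))

/-- The difference-of-monomials set `G₁`: differences of distinct degree-2 monic monomials
with equal multidegree. -/
def binomSet (A : Finset (ℤ × ℤ)) (F : Type*) [Field F] : Set (MvPolynomial ↥A F) :=
  {f | ∃ d d' : ↥A →₀ ℕ, d ≠ d' ∧ expDeg d = 2 ∧ expDeg d' = 2 ∧ expMdeg d = expMdeg d' ∧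
    f = monomial d 1 - monomial d' 1}

/-! A degree-2 monomial `z^d` survives in the quotient only if it is the `≺`-smallest degree-2
monomial of its multidegree, since otherwise it is the leading term of a binomial in `G₁`; and
only if its multidegree `c` lies outside `C`, since otherwise it is either the leading monomial
`σ(c)` of some `h ∈ H` or larger than `σ(c)`. The surviving monomials span the degree-2 part of
the quotient, and the multidegree maps them injectively into `(A + A) \ C`. -/

theorem finrank_map_homogeneousSubmodule_le_card {σ R M : Type*} [CommRing R]
    [StrongRankCondition R] [AddCommGroup M] [Module R M]
    (q : MvPolynomial σ R →ₗ[R] M) (n : ℕ) (N : Finset (σ →₀ ℕ))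
    (hN : ∀ d : σ →₀ ℕ, d.degree = n → q (monomial d 1) ≠ 0 → d ∈ N) :
    Module.finrank R ((homogeneousSubmodule σ R n).map q) ≤ N.card := by
  classical
  set v : (σ →₀ ℕ) → M := fun d => q (monomial d 1)
  have hle : (homogeneousSubmodule σ R n).map q ≤ Submodule.span R (N.image v : Set M) := by
    rw [homogeneousSubmodule_eq_finsupp_supported, AddMonoidAlgebra.supported_eq_span_single,
      Submodule.map_span, Submodule.span_le, ← Set.image_comp]
    rintro _ ⟨d, hd, rfl⟩
    change v d ∈ _
    by_cases hv : v d = 0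
    · exact hv ▸ Submodule.zero_mem _
    · exact Submodule.subset_span (Finset.mem_coe.2 (Finset.mem_image_of_mem v (hN d hd hv)))
  calc Module.finrank R ((homogeneousSubmodule σ R n).map q)
      ≤ Module.finrank R (Submodule.span R (N.image v : Set M)) := Submodule.finrank_mono hle
    _ ≤ (N.image v).card := finrank_span_finset_le_card _
    _ ≤ N.card := Finset.card_image_le

theorem leadingTerm_monomial_sub_monomial {σ R : Type*} [CommRing R] [Nontrivial R]
    (m : MonomialOrder σ) {d e : σ →₀ ℕ} (h : e ≺[m] d) :
    m.leadingTerm (monomial d (1 : R) - monomial e 1) = monomial d 1 := by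
  have hdeg (a : σ →₀ ℕ) : m.degree (monomial a (1 : R)) = a := by
    classical
    simp [MonomialOrder.degree_monomial]
  have hlt : m.degree (monomial e (1 : R)) ≺[m] m.degree (monomial d (1 : R)) := by
    rwa [hdeg, hdeg]
  rw [MonomialOrder.leadingTerm, m.degree_sub_of_lt hlt, m.leadingCoeff_sub_of_lt hlt, hdeg,
    MonomialOrder.leadingCoeff_monomial]

theorem monomial_degree_mem_of_leadingTerm_mem {σ F : Type*} [Field F] (m : MonomialOrder σ)
    {I : Ideal (MvPolynomial σ F)} {f : MvPolynomial σ F} (hf : f ≠ 0)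
    (h : m.leadingTerm f ∈ I) : monomial (m.degree f) 1 ∈ I := by
  have hc : m.leadingCoeff f ≠ 0 := m.leadingCoeff_ne_zero_iff.2 hf
  rw [← inv_mul_cancel₀ hc, ← C_mul_monomial]
  exact I.mul_mem_left _ h

section Exponents

variable {A : Finset (ℤ × ℤ)}

theorem expMdeg_add (d e : ↥A →₀ ℕ) : expMdeg (d + e) = expMdeg d + expMdeg e :=
  Finsupp.sum_add_index' (fun _ => zero_smul ℕ _) (fun _ _ _ => add_smul _ _ _)

theorem expMdeg_single (a : ↥A) (k : ℕ) : expMdeg (Finsupp.single a k) = k • (a : ℤ × ℤ) :=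
  Finsupp.sum_single_index (zero_smul ℕ _)

theorem exists_eq_single_add_single_of_expDeg_eq_two {d : ↥A →₀ ℕ} (h : expDeg d = 2) :
    ∃ a a' : ↥A, d = Finsupp.single a 1 + Finsupp.single a' 1 := by
  classical
  obtain ⟨a, a', had⟩ := Multiset.card_eq_two.mp ((Finsupp.card_toMultiset d).trans h)
  refine ⟨a, a', ?_⟩
  rw [← Finsupp.toMultiset_toFinsupp d, had, Multiset.insert_eq_cons, ← Multiset.singleton_add,
    Multiset.toFinsupp_add, Multiset.toFinsupp_singleton, Multiset.toFinsupp_singleton]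

theorem expMdeg_mem_add_of_expDeg_eq_two {d : ↥A →₀ ℕ} (h : expDeg d = 2) :
    expMdeg d ∈ A + A := by
  obtain ⟨a, a', rfl⟩ := exists_eq_single_add_single_of_expDeg_eq_two h
  rw [expMdeg_add, expMdeg_single, expMdeg_single, one_smul, one_smul]
  exact Finset.add_mem_add a.2 a'.2

end Exponents

theorem leadExp_eq_degree {σ R : Type*} [CommSemiring R] (m : MonomialOrder σ)
    (f : MvPolynomial σ R) : leadExp m f = m.degree f :=
  rfl

theorem leadTerm_eq_leadingTerm {σ R : Type*} [CommSemiring R] (m : MonomialOrder σ)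
    (f : MvPolynomial σ R) : leadTerm m f = m.leadingTerm f :=
  rfl

section InitialIdeal

variable {A : Finset (ℤ × ℤ)} {F : Type*} [Field F] {m : MonomialOrder ↥A}
  {I : Ideal (MvPolynomial ↥A F)}

theorem monomial_mem_of_lt_of_expMdeg_eq (hI : ∀ f ∈ binomSet A F, leadTerm m f ∈ I)
    {d e : ↥A →₀ ℕ} (hd : expDeg d = 2) (he : expDeg e = 2) (hde : expMdeg d = expMdeg e)
    (hlt : e ≺[m] d) : monomial d 1 ∈ I := by
  have hne : d ≠ e := ne_of_apply_ne m.toSyn hlt.ne'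
  have h := hI _ ⟨d, e, hne, hd, he, hde, rfl⟩
  rwa [leadTerm_eq_leadingTerm, leadingTerm_monomial_sub_monomial m hlt] at h

theorem injOn_expMdeg (hI : ∀ f ∈ binomSet A F, leadTerm m f ∈ I) :
    {d : ↥A →₀ ℕ | expDeg d = 2 ∧ monomial d (1 : F) ∉ I}.InjOn expMdeg := by
  rintro d ⟨hd, hdI⟩ e ⟨he, heI⟩ hde
  by_contra hne
  rcases lt_or_gt_of_ne (m.toSyn.injective.ne hne) with hlt | hlt
  · exact heI (monomial_mem_of_lt_of_expMdeg_eq hI he hd hde.symm hlt)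
  · exact hdI (monomial_mem_of_lt_of_expMdeg_eq hI hd he hde hlt)

theorem monomial_mem_of_leadExp_isMin (hI : ∀ f ∈ binomSet A F, leadTerm m f ∈ I)
    {c : ℤ × ℤ} {h : MvPolynomial ↥A F} (hhI : leadTerm m h ∈ I)
    (hh : expDeg (leadExp m h) = 2 ∧ expMdeg (leadExp m h) = c ∧
      ∀ d : ↥A →₀ ℕ, expDeg d = 2 → expMdeg d = c → leadExp m h ≼[m] d)
    {d : ↥A →₀ ℕ} (hd : expDeg d = 2) (hdc : expMdeg d = c) : monomial d 1 ∈ I := by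
  obtain ⟨hh2, rfl, hmin⟩ := hh
  rcases (hmin d hd hdc).eq_or_lt with heq | hlt
  · have hh0 : h ≠ 0 := by
      rintro rfl
      simp [leadExp_eq_degree, expDeg] at hh2
    rw [← m.toSyn.injective heq, leadExp_eq_degree]
    exact monomial_degree_mem_of_leadingTerm_mem m hh0 hhI
  · exact monomial_mem_of_lt_of_expMdeg_eq hI hd hh2 hdc hlt

end InitialIdeal

theorem dim_quotient_initial_ideal_le_general (A : Finset (ℤ × ℤ))
    (F : Type*) [Field F] (m : MonomialOrder ↥A)
    (C : Finset (ℤ × ℤ)) (H : Set (MvPolynomial ↥A F))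
    (hH : ∀ c ∈ C, ∃ h ∈ H, expDeg (leadExp m h) = 2 ∧ expMdeg (leadExp m h) = c ∧
      ∀ d : ↥A →₀ ℕ, expDeg d = 2 → expMdeg d = c → leadExp m h ≼[m] d) :
    Module.finrank F
      ((homogeneousSubmodule ↥A F 2).map
        (Ideal.Quotient.mkₐ F (Ideal.span (leadTerm m '' (binomSet A F ∪ H)))).toLinearMap) ≤
    ((A + A) \ C).card := by
  set I := Ideal.span (leadTerm m '' (binomSet A F ∪ H))
  have hI : ∀ f ∈ binomSet A F, leadTerm m f ∈ I :=
    fun f hf => Ideal.subset_span ⟨f, Or.inl hf, rfl⟩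
  set N := {d : ↥A →₀ ℕ | expDeg d = 2 ∧ monomial d (1 : F) ∉ I}
  have hinj : N.InjOn expMdeg := injOn_expMdeg hI
  have hmaps : N.MapsTo expMdeg ((A + A) \ C : Finset (ℤ × ℤ)) := by
    rintro d ⟨hd, hdI⟩
    refine Finset.mem_sdiff.2 ⟨expMdeg_mem_add_of_expDeg_eq_two hd, fun hc => hdI ?_⟩
    obtain ⟨h, hhH, hh⟩ := hH _ hc
    exact monomial_mem_of_leadExp_isMin hI (Ideal.subset_span ⟨h, Or.inr hhH, rfl⟩) hh hd rfl
  have hfin : N.Finite := Set.Finite.of_injOn hmaps hinj (Finset.finite_toSet _)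
  calc _ ≤ hfin.toFinset.card := by
        refine finrank_map_homogeneousSubmodule_le_card _ 2 _ fun d hd hq => ?_
        rw [Set.Finite.mem_toFinset]
        refine ⟨hd, fun hdI => hq ?_⟩
        exact Ideal.Quotient.eq_zero_iff_mem.2 hdI
    _ ≤ ((A + A) \ C).card :=
        Finset.card_le_card_of_injOn expMdeg (by simpa using hmaps) (by simpa using hinj)

/-- if `C ⊆ A + A` and `H` is a set of polynomials such that for every `c ∈ C`
some `h ∈ H` has leading monomial `σ(c)`, the `≺`-minimal degree-2 monic monomial of
multidegree `c`, then `dim_F (S/⟨in_≺(G₁ ∪ H)⟩)_2 ≤ |(A + A) \ C|`. -/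
theorem dim_quotient_initial_ideal_le (A : Finset (ℤ × ℤ)) (hA : A.Nonempty)
    (F : Type*) [Field F] (m : MonomialOrder ↥A)
    (C : Finset (ℤ × ℤ)) (hC : C ⊆ A + A) (H : Set (MvPolynomial ↥A F))
    (hH : ∀ c ∈ C, ∃ h ∈ H, expDeg (leadExp m h) = 2 ∧ expMdeg (leadExp m h) = c ∧
      ∀ d : ↥A →₀ ℕ, expDeg d = 2 → expMdeg d = c → leadExp m h ≼[m] d) :
    Module.finrank F
      ((homogeneousSubmodule ↥A F 2).map
        (Ideal.Quotient.mkₐ F (Ideal.span (leadTerm m '' (binomSet A F ∪ H)))).toLinearMap) ≤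
    ((A + A) \ C).card :=
  dim_quotient_initial_ideal_le_general A F m C H hH
end
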